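/- Let s = (−1, 0), let θ ∈ (−π/2, π/2) and d := (cos 2θ, sin 2θ) ∈ S¹. Then for every x on the unit circle S¹ with x ≠ s and x ≠ d, the unoriented angle between x − s and d − x equals either π/2 − θ or π/2 + θ. -/
import Mathlib


open scoped RealInnerProductSpace

noncomputable def vec2 (a b : ℝ) : EuclideanSpace ℝ (Fin 2) :=
  (WithLp.equiv 2 (Fin 2 → ℝ)).symm ![a, b]

/-- For the source `s = (−1, 0)` and the detector `d = (cos 2θ, sin 2θ)` on the unit
circle, every point `x` of the unit circle distinct from `s` and `d` sees the chord at a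
scattering angle equal to `π/2 − θ` or `π/2 + θ`: the circular arcs of constant
scattering angle `π/2 ∓ θ` through `s` and `d` are subsets of `S¹`. -/
theorem scattering_angle_on_circle (θ : ℝ)
    (hθ : θ ∈ Set.Ioo (-(Real.pi / 2)) (Real.pi / 2))
    (s d : EuclideanSpace ℝ (Fin 2)) (hs : s = vec2 (-1) 0)
    (hd : d = vec2 (Real.cos (2 * θ)) (Real.sin (2 * θ)))
    (x : EuclideanSpace ℝ (Fin 2)) (hx : ‖x‖ = 1) (hxs : x ≠ s) (hxd : x ≠ d) :
    InnerProductGeometry.angle (x - s) (d - x) = Real.pi / 2 - θ ∨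
      InnerProductGeometry.angle (x - s) (d - x) = Real.pi / 2 + θ := by
  obtain ⟨hθ1, hθ2⟩ := hθ
  have hpyth : Real.sin θ ^ 2 + Real.cos θ ^ 2 = 1 := Real.sin_sq_add_cos_sq θ
  have hs0 : s 0 = -1 := by rw [hs]; simp [vec2]
  have hs1 : s 1 = 0 := by rw [hs]; simp [vec2]
  have hd0 : d 0 = Real.cos θ ^ 2 - Real.sin θ ^ 2 := by
    rw [hd]; simp [vec2, Real.cos_two_mul']
  have hd1 : d 1 = 2 * Real.sin θ * Real.cos θ := by
    rw [hd]; simp [vec2, Real.sin_two_mul]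
  have hab : x 0 ^ 2 + x 1 ^ 2 = 1 := by
    have h2 : ⟪x, x⟫ = 1 := by rw [real_inner_self_eq_norm_sq, hx]; norm_num
    rw [PiLp.inner_apply, Fin.sum_univ_two] at h2
    simp only [RCLike.inner_apply, conj_trivial] at h2
    linear_combination h2
  have hnu : ‖x - s‖ ^ 2 = 2 + 2 * x 0 := by
    rw [← real_inner_self_eq_norm_sq, PiLp.inner_apply, Fin.sum_univ_two]
    simp only [RCLike.inner_apply, conj_trivial, PiLp.sub_apply, hs0, hs1]
    linear_combination hab
  have hnv : ‖d - x‖ ^ 2 = 2 - 2 * (x 0 * (Real.cos θ ^ 2 - Real.sin θ ^ 2)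
      + x 1 * (2 * Real.sin θ * Real.cos θ)) := by
    rw [← real_inner_self_eq_norm_sq, PiLp.inner_apply, Fin.sum_univ_two]
    simp only [RCLike.inner_apply, conj_trivial, PiLp.sub_apply, hd0, hd1]
    linear_combination hab + (Real.sin θ ^ 2 + Real.cos θ ^ 2 + 1) * hpyth
  have hinner : ⟪x - s, d - x⟫
      = -2 * Real.sin θ * (Real.sin θ * (x 0 + 1) - x 1 * Real.cos θ) := by
    rw [PiLp.inner_apply, Fin.sum_univ_two]
    simp only [RCLike.inner_apply, conj_trivial, PiLp.sub_apply, hs0, hs1, hd0, hd1]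
    linear_combination (x 0 + 1) * hpyth - hab
  have hu0 : ‖x - s‖ ≠ 0 := by
    rw [norm_ne_zero_iff, sub_ne_zero]; exact hxs
  have hv0 : ‖d - x‖ ≠ 0 := by
    rw [norm_ne_zero_iff, sub_ne_zero]; exact fun h => hxd h.symm
  have hkey : ⟪x - s, d - x⟫ ^ 2 = (Real.sin θ * (‖x - s‖ * ‖d - x‖)) ^ 2 := by
    have : (Real.sin θ * (‖x - s‖ * ‖d - x‖)) ^ 2
        = Real.sin θ ^ 2 * (‖x - s‖ ^ 2 * ‖d - x‖ ^ 2) := by ring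
    rw [this, hnu, hnv, hinner]
    linear_combination (4 * Real.sin θ ^ 2 * (1 + x 0)) * hpyth
      + (4 * Real.sin θ ^ 2 * Real.cos θ ^ 2) * hab
  rcases sq_eq_sq_iff_eq_or_eq_neg.mp hkey with h | h
  · left
    rw [InnerProductGeometry.angle, h]
    have hq : Real.sin θ * (‖x - s‖ * ‖d - x‖) / (‖x - s‖ * ‖d - x‖) = Real.sin θ := by
      field_simp
    rw [hq, ← Real.cos_pi_div_two_sub,
      Real.arccos_cos (by linarith) (by nlinarith [Real.pi_pos])]
  · right
    rw [InnerProductGeometry.angle, h]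
    have hq : -(Real.sin θ * (‖x - s‖ * ‖d - x‖)) / (‖x - s‖ * ‖d - x‖)
        = -Real.sin θ := by field_simp
    have hcos : Real.cos (Real.pi / 2 + θ) = -Real.sin θ := by
      rw [Real.cos_add]; simp
    rw [hq, ← hcos, Real.arccos_cos (by linarith) (by nlinarith [Real.pi_pos])]
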